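/- arXiv:1305.0257 — 2 statements merged into one kernel-verified Lean document; each statement's English description precedes it below -/
import Mathlib

section
/- There exists a subspace S ⊆ ℂ^m ⊗ ℂ^n of dimension (m−1)(n−1) such that every density matrix ρ ∈ M_m(ℂ) ⊗ M_n(ℂ) whose range is contained in S has non-positive partial transpose, i.e., ρ^Γ is not positive semidefinite. Explicitly, S = span{ |j⟩|k+1⟩ − |j+1⟩|k⟩ : 0 ≤ j ≤ m−2, 0 ≤ k ≤ n−2 } works. -/
open Matrix Complex Finset
open scoped ComplexOrder

noncomputable def entSub (m n : ℕ) : Submodule ℂ (Fin m × Fin n → ℂ) :=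
  Submodule.span ℂ {x | ∃ (j k : ℕ) (hj : j + 1 < m) (hk : k + 1 < n),
    x = Pi.single ((⟨j, by omega⟩ : Fin m), (⟨k + 1, hk⟩ : Fin n)) (1 : ℂ)
      - Pi.single ((⟨j + 1, hj⟩ : Fin m), (⟨k, by omega⟩ : Fin n)) (1 : ℂ)}

def ptranspose {m n : ℕ} (ρ : Matrix (Fin m × Fin n) (Fin m × Fin n) ℂ) :
    Matrix (Fin m × Fin n) (Fin m × Fin n) ℂ :=
  fun a b => ρ (a.1, b.2) (b.1, a.2)

/-!
Let `w t` be the indicator of the antidiagonal `a + b = t` and `u δ` that of the diagonal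
`a - b = δ`. Each generator `|j⟩|k+1⟩ - |j+1⟩|k⟩` of `entSub` is orthogonal to every `w t`, so
`⟨w t, ρ w t⟩ = 0` when the range of `ρ` lies in `entSub`. The substitution
`((a, b), (c, d)) ↦ ((a, d), (c, b))` turns `∑ δ, ⟨u δ, ρ^Γ u δ⟩` into `∑ t, ⟨w t, ρ w t⟩ = 0`,
so if `ρ^Γ ≥ 0` every `⟨u δ, ρ^Γ u δ⟩` vanishes. For `δ` maximal among the diagonals carrying a
nonzero diagonal entry of `ρ ≥ 0`, the off-diagonal terms of `⟨u δ, ρ^Γ u δ⟩` are entries of `ρ`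
in a row or column through a zero diagonal entry, hence zero; what remains is a sum of diagonal
entries of `ρ`, which must all vanish. So `ρ` has zero diagonal, contradicting `tr ρ = 1`.

The dimension count uses the partial antidiagonal sums `∑_{a ≤ j, a + b = j + k + 1} x (a, b)`
as a family of linear forms dual to the generators.
-/

section Fiber

variable {ι κ R : Type*} [DecidableEq κ]

def fiberIndicator [Zero R] [One R] (g : ι → κ) (k : κ) : ι → R :=
  fun i => if g i = k then 1 else 0

@[simp]
lemma star_fiberIndicator [NonAssocSemiring R] [StarRing R] (g : ι → κ) (k : κ) :
    star (fiberIndicator g k : ι → R) = fiberIndicator g k := by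
  ext i
  simp only [fiberIndicator, Pi.star_apply]
  split_ifs <;> simp

lemma fiberIndicator_dotProduct_mulVec [Fintype ι] [NonAssocSemiring R] (M : Matrix ι ι R)
    (g : ι → κ) (k : κ) :
    fiberIndicator g k ⬝ᵥ M *ᵥ fiberIndicator g k =
      ∑ i, ∑ j, if g i = k ∧ g j = k then M i j else 0 := by
  simp only [dotProduct, mulVec, fiberIndicator, mul_sum]
  refine sum_congr rfl fun i _ => sum_congr rfl fun j _ => ?_
  split_ifs <;> simp_all

lemma sum_fiberIndicator_dotProduct_mulVec [Fintype ι] [NonAssocSemiring R] (M : Matrix ι ι R)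
    (g : ι → κ) :
    ∑ k ∈ univ.image g, fiberIndicator g k ⬝ᵥ M *ᵥ fiberIndicator g k =
      ∑ i, ∑ j, if g i = g j then M i j else 0 := by
  simp only [fiberIndicator_dotProduct_mulVec]
  rw [sum_comm]
  refine sum_congr rfl fun i _ => ?_
  rw [sum_comm]
  refine sum_congr rfl fun j _ => ?_
  rw [sum_eq_single (g i)]
  · simp [eq_comm]
  · intro k _ hk
    rw [if_neg fun h => hk h.1.symm]
  · exact fun h => (h (mem_image_of_mem g (mem_univ i))).elim

end Fiber

lemma Matrix.PosSemidef.apply_eq_zero_of_diag_eq_zero {ι 𝕜 : Type*} [Fintype ι] [DecidableEq ι]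
    [RCLike 𝕜] {M : Matrix ι ι 𝕜} (hM : M.PosSemidef) {i : ι} (hi : M i i = 0) (j : ι) :
    M i j = 0 ∧ M j i = 0 := by
  have hcol : M *ᵥ Pi.single i 1 = 0 :=
    (hM.dotProduct_mulVec_zero_iff _).mp (by simp [hi])
  have hji : M j i = 0 := by simpa using congrFun hcol j
  exact ⟨by rw [← hM.isHermitian.apply, hji, star_zero], hji⟩

section Grid

variable {m n : ℕ}

def antidiagIndex (p : Fin m × Fin n) : ℕ := p.1 + p.2

def diagIndex (p : Fin m × Fin n) : ℤ := (p.1 : ℤ) - p.2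

lemma sum_ite_diagIndex_ptranspose (ρ : Matrix (Fin m × Fin n) (Fin m × Fin n) ℂ) :
    (∑ x, ∑ y, if diagIndex x = diagIndex y then ptranspose ρ x y else 0) =
      ∑ x, ∑ y, if antidiagIndex x = antidiagIndex y then ρ x y else 0 := by
  simp only [← Fintype.sum_prod_type']
  let swapSecond : (Fin m × Fin n) × (Fin m × Fin n) ≃ (Fin m × Fin n) × (Fin m × Fin n) :=
    ⟨fun x => ((x.1.1, x.2.2), (x.2.1, x.1.2)), fun x => ((x.1.1, x.2.2), (x.2.1, x.1.2)),
      fun _ => rfl, fun _ => rfl⟩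
  refine Fintype.sum_equiv swapSecond _ _ fun ⟨⟨a, b⟩, ⟨c, d⟩⟩ => ?_
  simp only [diagIndex, antidiagIndex, ptranspose, swapSecond, Equiv.coe_fn_mk]
  exact if_congr (by omega) rfl rfl

lemma ptranspose_apply_nonneg {ρ : Matrix (Fin m × Fin n) (Fin m × Fin n) ℂ} (hρ : ρ.PosSemidef)
    {δ : ℤ} (hδ : ∀ p, δ < diagIndex p → ρ p p = 0) {x y : Fin m × Fin n}
    (hx : diagIndex x = δ) (hy : diagIndex y = δ) : 0 ≤ ptranspose ρ x y := by
  obtain ⟨a, b⟩ := x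
  obtain ⟨c, d⟩ := y
  simp only [diagIndex] at hx hy
  show 0 ≤ ρ (a, d) (c, b)
  rcases lt_trichotomy a c with hac | rfl | hca
  · rw [(hρ.apply_eq_zero_of_diag_eq_zero (hδ (c, b) (by simp only [diagIndex]; omega)) _).2]
  · obtain rfl : b = d := by omega
    exact hρ.diag_nonneg
  · rw [(hρ.apply_eq_zero_of_diag_eq_zero (hδ (a, d) (by simp only [diagIndex]; omega)) _).1]

lemma diag_eq_zero_of_ptranspose_fiber_eq_zero {ρ : Matrix (Fin m × Fin n) (Fin m × Fin n) ℂ}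
    (hρ : ρ.PosSemidef)
    (h : ∀ p : Fin m × Fin n, fiberIndicator diagIndex (diagIndex p) ⬝ᵥ
      ptranspose ρ *ᵥ fiberIndicator diagIndex (diagIndex p) = 0)
    (p : Fin m × Fin n) : ρ p p = 0 := by
  by_contra hp
  obtain ⟨q, hq, hmax⟩ := exists_max_image {p | ρ p p ≠ 0} diagIndex ⟨p, by simpa⟩
  have hδ : ∀ p, diagIndex q < diagIndex p → ρ p p = 0 := fun p hlt =>
    by_contra fun hp => (hmax p (by simpa)).not_gt hlt
  have hterm (x y : Fin m × Fin n) : 0 ≤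
      if diagIndex x = diagIndex q ∧ diagIndex y = diagIndex q then ptranspose ρ x y else 0 := by
    split_ifs with hxy
    exacts [ptranspose_apply_nonneg hρ hδ hxy.1 hxy.2, le_rfl]
  have hsum := h q
  rw [fiberIndicator_dotProduct_mulVec] at hsum
  have hrow := (Fintype.sum_eq_zero_iff_of_nonneg
    fun x => sum_nonneg fun y _ => hterm x y).mp hsum
  have hqq := (Fintype.sum_eq_zero_iff_of_nonneg (hterm q)).mp (congrFun hrow q)
  simp only [mem_filter] at hq
  exact hq.2 (by simpa [ptranspose] using congrFun hqq q)

end Grid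

section EntangledSubspace

variable {m n : ℕ}

def entGen (i : Fin (m - 1) × Fin (n - 1)) : Fin m × Fin n → ℂ :=
  Pi.single (⟨i.1, by omega⟩, ⟨i.2 + 1, by omega⟩) 1 -
    Pi.single (⟨i.1 + 1, by omega⟩, ⟨i.2, by omega⟩) 1

lemma entSub_eq_span_range_entGen : entSub m n = Submodule.span ℂ (Set.range entGen) := by
  rw [entSub]
  congr
  ext x
  constructor
  · rintro ⟨j, k, hj, hk, rfl⟩
    exact ⟨(⟨j, by omega⟩, ⟨k, by omega⟩), rfl⟩
  · rintro ⟨⟨j, k⟩, rfl⟩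
    exact ⟨j, k, by omega, by omega, rfl⟩

lemma dotProduct_entGen (v : Fin m × Fin n → ℂ) (i : Fin (m - 1) × Fin (n - 1)) :
    v ⬝ᵥ entGen i =
      v (⟨i.1, by omega⟩, ⟨i.2 + 1, by omega⟩) - v (⟨i.1 + 1, by omega⟩, ⟨i.2, by omega⟩) := by
  simp [entGen, dotProduct_sub]

lemma fiberIndicator_antidiagIndex_dotProduct_eq_zero (t : ℕ) {x : Fin m × Fin n → ℂ}
    (hx : x ∈ entSub m n) : fiberIndicator antidiagIndex t ⬝ᵥ x = 0 := by
  rw [entSub_eq_span_range_entGen] at hx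
  induction hx using Submodule.span_induction with
  | mem _ hx =>
    obtain ⟨i, rfl⟩ := hx
    simp only [dotProduct_entGen, fiberIndicator, antidiagIndex, sub_eq_zero]
    exact if_congr (by omega) rfl rfl
  | zero => exact dotProduct_zero _
  | add _ _ _ _ hx hy => rw [dotProduct_add, hx, hy, add_zero]
  | smul _ _ _ hx => rw [dotProduct_smul, hx, smul_zero]

def partialAntidiagIndicator (i : Fin (m - 1) × Fin (n - 1)) : Fin m × Fin n → ℂ :=
  fun p => if (p.1 : ℕ) ≤ i.1 ∧ antidiagIndex p = i.1 + i.2 + 1 then 1 else 0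

lemma partialAntidiagIndicator_dotProduct_entGen (i j : Fin (m - 1) × Fin (n - 1)) :
    partialAntidiagIndicator i ⬝ᵥ entGen j = if i = j then 1 else 0 := by
  rcases eq_or_ne i j with rfl | hij
  · simp [dotProduct_entGen, partialAntidiagIndicator, antidiagIndex, add_assoc]
  · rw [if_neg hij, dotProduct_entGen, sub_eq_zero]
    simp only [Ne, Prod.ext_iff, Fin.ext_iff] at hij
    simp only [partialAntidiagIndicator, antidiagIndex]
    exact if_congr (by omega) rfl rfl

lemma linearIndependent_entGen : LinearIndependent ℂ (entGen (m := m) (n := n)) :=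
  .of_pairwise_dual_eq_zero_one _ (fun i => dotProductEquiv ℂ _ (partialAntidiagIndicator i))
    (fun i j hij => by simpa [partialAntidiagIndicator_dotProduct_entGen] using hij)
    fun i => by simpa using partialAntidiagIndicator_dotProduct_entGen i i

lemma finrank_entSub : Module.finrank ℂ (entSub m n) = (m - 1) * (n - 1) := by
  rw [entSub_eq_span_range_entGen, finrank_span_eq_card linearIndependent_entGen]
  simp

end EntangledSubspace

theorem stmt_8_general (m n : ℕ) :
    Module.finrank ℂ (entSub m n) = (m - 1) * (n - 1) ∧
    ∀ ρ : Matrix (Fin m × Fin n) (Fin m × Fin n) ℂ,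
      ρ.PosSemidef → ρ.trace = 1 →
      (∀ v, ρ *ᵥ v ∈ entSub m n) →
      ¬ (ptranspose ρ).PosSemidef := by
  refine ⟨finrank_entSub, fun ρ hρ htr hran hσ => ?_⟩
  have hsum : ∑ δ ∈ univ.image (diagIndex (m := m) (n := n)),
      fiberIndicator diagIndex δ ⬝ᵥ ptranspose ρ *ᵥ fiberIndicator diagIndex δ = 0 := by
    rw [sum_fiberIndicator_dotProduct_mulVec, sum_ite_diagIndex_ptranspose,
      ← sum_fiberIndicator_dotProduct_mulVec ρ antidiagIndex]
    exact sum_eq_zero fun t _ => fiberIndicator_antidiagIndex_dotProduct_eq_zero t (hran _)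
  have hfiber := (sum_eq_zero_iff_of_nonneg fun δ _ => by
    simpa using hσ.dotProduct_mulVec_nonneg (fiberIndicator diagIndex δ)).mp hsum
  have hdiag := diag_eq_zero_of_ptranspose_fiber_eq_zero hρ fun p =>
    hfiber _ (mem_image_of_mem _ (mem_univ p))
  exact one_ne_zero (htr.symm.trans (sum_eq_zero fun p _ => hdiag p))

theorem stmt_8 (m n : ℕ) (hm : 2 ≤ m) (hn : 2 ≤ n) :
    Module.finrank ℂ (entSub m n) = (m - 1) * (n - 1) ∧
    ∀ ρ : Matrix (Fin m × Fin n) (Fin m × Fin n) ℂ,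
      ρ.PosSemidef → ρ.trace = 1 →
      (∀ v, ρ *ᵥ v ∈ entSub m n) →
      ¬ (ptranspose ρ).PosSemidef :=
  stmt_8_general m n
end

section
/- The dual cone of the set of PPT states in M_m(ℂ) ⊗ M_n(ℂ) (with respect to the trace inner product on Hermitian matrices) equals { Y₁ + Y₂^Γ : Y₁, Y₂ positive semidefinite }. -/
open Matrix Complex Finset
open scoped ComplexOrder Pointwise

/-!
The decomposable operators `Y₁ + Y₂^Γ` form a convex cone `K`. It is closed: the trace is
nonnegative on both summands and has compact sublevel sets on the positive semidefinite cone, so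
near any point the sum only involves summands from a compact set. Every element of `K` lies in the
dual cone, since `Tr(X Y₁) ≥ 0` and `Tr(X Y₂^Γ) = Tr(X^Γ Y₂) ≥ 0` for a PPT state `X`. Conversely,
if a Hermitian `Y` is not in `K`, Hahn–Banach separation yields a functional `Re Tr(· W)` that is
nonnegative on `K` and negative at `Y`; testing it on `K ⊇ PSD` and `K ⊇ PSD^Γ` shows that the
Hermitian part `Z = W + Wᴴ` and `Z^Γ` are positive semidefinite, and `Z / Tr Z` is a PPT state
pairing negatively with `Y`.
-/

theorem isClosed_add_of_isCompact_sublevel {E : Type*} [TopologicalSpace E] [AddMonoid E]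
    [ContinuousAdd E] [T2Space E] {s t : Set E} (φ : E →+ ℝ) (hφ : Continuous φ)
    (hs : ∀ x ∈ s, 0 ≤ φ x) (ht : ∀ x ∈ t, 0 ≤ φ x)
    (hsc : ∀ r, IsCompact {x ∈ s | φ x ≤ r}) (htc : ∀ r, IsCompact {x ∈ t | φ x ≤ r}) :
    IsClosed (s + t) := by
  refine isClosed_of_closure_subset fun x hx => ?_
  -- near `x`, only summands from the compact sublevel sets at level `φ x + 1` contribute
  set r := φ x + 1
  have hU : IsOpen {y | φ y < r} := isOpen_lt hφ continuous_const
  have hsub : (s + t) ∩ {y | φ y < r} ⊆ {a ∈ s | φ a ≤ r} + {b ∈ t | φ b ≤ r} := by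
    rintro _ ⟨⟨a, ha, b, hb, rfl⟩, hab⟩
    have : φ a + φ b < r := by simpa using hab
    exact ⟨a, ⟨ha, by linarith [ht b hb]⟩, b, ⟨hb, by linarith [hs a ha]⟩, rfl⟩
  have hx' : x ∈ closure ((s + t) ∩ {y | φ y < r}) := by
    rw [Set.inter_comm]
    exact hU.inter_closure ⟨by simp [r], hx⟩
  obtain ⟨a, ha, b, hb, hab⟩ := ((hsc r).add (htc r)).isClosed.closure_subset_iff.2 hsub hx'
  exact ⟨a, ha.1, b, hb.1, hab⟩

instance {m n E : Type*} [AddCommGroup E] [TopologicalSpace E] [Module ℝ E]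
    [LocallyConvexSpace ℝ E] : LocallyConvexSpace ℝ (Matrix m n E) :=
  inferInstanceAs (LocallyConvexSpace ℝ (m → n → E))

namespace Matrix

variable {ι : Type*} [Fintype ι]

lemma exists_eq_trace_mul {R : Type*} [CommSemiring R] [DecidableEq ι]
    (f : Matrix ι ι R →ₗ[R] R) : ∃ W : Matrix ι ι R, ∀ X, f X = (X * W).trace := by
  refine ⟨of fun j i => f (single i j 1), fun X => ?_⟩
  conv_lhs => rw [matrix_eq_sum_single X]
  simp only [map_sum, trace, diag, mul_apply, of_apply]
  refine Finset.sum_congr rfl fun i _ => Finset.sum_congr rfl fun j _ => ?_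
  rw [← smul_eq_mul, ← map_smul, smul_single, smul_eq_mul, mul_one]

lemma exists_eq_re_trace_mul [DecidableEq ι] (f : Module.Dual ℝ (Matrix ι ι ℂ)) :
    ∃ W : Matrix ι ι ℂ, ∀ X, f X = (X * W).trace.re := by
  obtain ⟨W, hW⟩ := exists_eq_trace_mul (f.extendRCLike (𝕜 := ℂ))
  exact ⟨W, fun X => by rw [← hW, ← Module.Dual.re_extendRCLike_apply (𝕜 := ℂ)]; rfl⟩

lemma re_trace_mul_add_conjTranspose {X : Matrix ι ι ℂ} (hX : X.IsHermitian) (W : Matrix ι ι ℂ) :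
    (X * (W + Wᴴ)).trace.re = 2 * (X * W).trace.re := by
  have : (X * Wᴴ).trace = star (X * W).trace := by
    rw [← trace_conjTranspose, conjTranspose_mul, hX.eq, trace_mul_comm]
  rw [Matrix.mul_add, trace_add, add_re, this, star_def, conj_re, two_mul]

lemma PosSemidef.exists_eq_conjTranspose_mul_self {A : Matrix ι ι ℂ} (hA : A.PosSemidef) :
    ∃ B : Matrix ι ι ℂ, A = Bᴴ * B := by
  classical
  open scoped MatrixOrder in
  exact CStarAlgebra.nonneg_iff_eq_star_mul_self.mp hA.nonneg

lemma PosSemidef.trace_mul_nonneg {A B : Matrix ι ι ℂ} (hA : A.PosSemidef) (hB : B.PosSemidef) :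
    0 ≤ (A * B).trace := by
  obtain ⟨C, rfl⟩ := hB.exists_eq_conjTranspose_mul_self
  rw [← Matrix.mul_assoc, trace_mul_comm, ← Matrix.mul_assoc]
  exact (hA.mul_mul_conjTranspose_same C).trace_nonneg

lemma posSemidef_of_re_trace_mul_nonneg {M : Matrix ι ι ℂ} (hM : M.IsHermitian)
    (h : ∀ X : Matrix ι ι ℂ, X.PosSemidef → 0 ≤ (X * M).trace.re) : M.PosSemidef := by
  refine PosSemidef.of_dotProduct_mulVec_nonneg hM fun x => ?_
  have hx := h _ (posSemidef_vecMulVec_self_star x)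
  rw [vecMulVec_mul, trace_vecMulVec, dotProduct_comm, ← dotProduct_mulVec] at hx
  exact Complex.nonneg_iff.mpr ⟨hx, (hM.im_star_dotProduct_mulVec_self x).symm⟩

lemma PosSemidef.apply_le_trace {A : Matrix ι ι ℂ} (hA : A.PosSemidef) (i : ι) :
    A i i ≤ A.trace :=
  Finset.single_le_sum (f := A.diag) (fun _ _ => hA.diag_nonneg) (Finset.mem_univ i)

lemma PosSemidef.norm_apply_le_re_trace {A : Matrix ι ι ℂ} (hA : A.PosSemidef) (i j : ι) :
    ‖A i j‖ ≤ A.trace.re := by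
  obtain ⟨B, rfl⟩ := hA.exists_eq_conjTranspose_mul_self
  let col : ι → EuclideanSpace ℂ ι := fun i => WithLp.toLp 2 fun l => B l i
  have hinner : ∀ i j, (Bᴴ * B) i j = inner ℂ (col i) (col j) := by
    intro i j
    simp [col, mul_apply, EuclideanSpace.inner_eq_star_dotProduct, dotProduct, mul_comm]
  have hdiag : ∀ i, ‖col i‖ ^ 2 ≤ (Bᴴ * B).trace.re := fun i => by
    rw [norm_sq_eq_re_inner (𝕜 := ℂ), ← hinner]
    exact (Complex.le_def.mp (hA.apply_le_trace i)).1
  calc ‖(Bᴴ * B) i j‖ ≤ ‖col i‖ * ‖col j‖ := hinner i j ▸ norm_inner_le_norm _ _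
    _ ≤ (‖col i‖ ^ 2 + ‖col j‖ ^ 2) / 2 := by nlinarith [sq_nonneg (‖col i‖ - ‖col j‖)]
    _ ≤ (Bᴴ * B).trace.re := by linarith [hdiag i, hdiag j]

lemma isClosed_setOf_posSemidef : IsClosed {A : Matrix ι ι ℂ | A.PosSemidef} := by
  classical
  open scoped MatrixOrder Matrix.Norms.L2Operator in
  simp_rw [← nonneg_iff_posSemidef]
  exact isClosed_Ici

lemma isCompact_setOf_posSemidef_re_trace_le (r : ℝ) :
    IsCompact {A : Matrix ι ι ℂ | A.PosSemidef ∧ A.trace.re ≤ r} := by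
  refine (isCompact_univ_pi fun _ => isCompact_univ_pi fun _ =>
    isCompact_closedBall (0 : ℂ) r).of_isClosed_subset ?_ ?_
  · exact isClosed_setOf_posSemidef.inter
      (isClosed_le (continuous_re.comp continuous_id.matrix_trace) continuous_const)
  · rintro A ⟨hA, hr⟩ i - j -
    simpa using (hA.norm_apply_le_re_trace i j).trans hr

end Matrix

section ptranspose

variable {m n : ℕ}

@[simp]
lemma ptranspose_add (A B : Matrix (Fin m × Fin n) (Fin m × Fin n) ℂ) :
    ptranspose (A + B) = ptranspose A + ptranspose B := rfl

@[simp]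
lemma ptranspose_smul {S : Type*} [SMul S ℂ] (c : S)
    (A : Matrix (Fin m × Fin n) (Fin m × Fin n) ℂ) : ptranspose (c • A) = c • ptranspose A := rfl

@[simp]
lemma ptranspose_zero : ptranspose (0 : Matrix (Fin m × Fin n) (Fin m × Fin n) ℂ) = 0 := rfl

lemma continuous_ptranspose :
    Continuous (ptranspose : Matrix (Fin m × Fin n) (Fin m × Fin n) ℂ → _) :=
  continuous_pi fun _ => continuous_pi fun _ => (continuous_apply _).comp (continuous_apply _)

@[simp]
lemma trace_ptranspose (A : Matrix (Fin m × Fin n) (Fin m × Fin n) ℂ) :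
    (ptranspose A).trace = A.trace := rfl

lemma trace_ptranspose_mul (A B : Matrix (Fin m × Fin n) (Fin m × Fin n) ℂ) :
    (ptranspose A * B).trace = (A * ptranspose B).trace := by
  simp only [trace, Matrix.diag, mul_apply, ptranspose]
  rw [← Finset.sum_product', ← Finset.sum_product']
  refine Finset.sum_nbij' (fun p => ((p.1.1, p.2.2), (p.2.1, p.1.2)))
    (fun p => ((p.1.1, p.2.2), (p.2.1, p.1.2))) ?_ ?_ ?_ ?_ ?_ <;> simp

lemma Matrix.IsHermitian.ptranspose {A : Matrix (Fin m × Fin n) (Fin m × Fin n) ℂ}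
    (hA : A.IsHermitian) : (ptranspose A).IsHermitian := by
  ext a b
  exact congrFun (congrFun hA (a.1, b.2)) (b.1, a.2)

end ptranspose

lemma isClosed_setOf_posSemidef_add_ptranspose (m n : ℕ) :
    IsClosed {Y : Matrix (Fin m × Fin n) (Fin m × Fin n) ℂ |
      ∃ Y₁ Y₂, Y₁.PosSemidef ∧ Y₂.PosSemidef ∧ Y = Y₁ + ptranspose Y₂} := by
  have hset : {Y | ∃ Y₁ Y₂, Y₁.PosSemidef ∧ Y₂.PosSemidef ∧ Y = Y₁ + ptranspose Y₂} =
      {A : Matrix (Fin m × Fin n) (Fin m × Fin n) ℂ | A.PosSemidef} +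
        ptranspose '' {A | A.PosSemidef} := by
    ext Y
    simp [Set.mem_add, eq_comm]
  have hsublevel (r : ℝ) : {Y ∈ ptranspose '' {A | A.PosSemidef} | Y.trace.re ≤ r} =
      ptranspose '' {A : Matrix (Fin m × Fin n) (Fin m × Fin n) ℂ |
        A.PosSemidef ∧ A.trace.re ≤ r} := by
    ext Y
    constructor
    · rintro ⟨⟨A, hA, rfl⟩, hr⟩
      exact ⟨A, ⟨hA, by simpa using hr⟩, rfl⟩
    · rintro ⟨A, ⟨hA, hr⟩, rfl⟩
      exact ⟨⟨A, hA, rfl⟩, by simpa using hr⟩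
  rw [hset]
  refine isClosed_add_of_isCompact_sublevel (reAddGroupHom.comp (traceAddMonoidHom _ ℂ))
    (continuous_re.comp continuous_id.matrix_trace) (fun A hA => (nonneg_iff.1 hA.trace_nonneg).1)
    ?_ isCompact_setOf_posSemidef_re_trace_le fun r => ?_
  · rintro _ ⟨A, hA, rfl⟩
    exact (nonneg_iff.1 hA.trace_nonneg).1
  · exact hsublevel r ▸ (isCompact_setOf_posSemidef_re_trace_le r).image continuous_ptranspose

def decomposableCone (m n : ℕ) : ProperCone ℝ (Matrix (Fin m × Fin n) (Fin m × Fin n) ℂ) where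
  carrier := {Y | ∃ Y₁ Y₂, Y₁.PosSemidef ∧ Y₂.PosSemidef ∧ Y = Y₁ + ptranspose Y₂}
  add_mem' := by
    rintro _ _ ⟨A₁, A₂, hA₁, hA₂, rfl⟩ ⟨B₁, B₂, hB₁, hB₂, rfl⟩
    exact ⟨A₁ + B₁, A₂ + B₂, hA₁.add hB₁, hA₂.add hB₂, by simp only [ptranspose_add]; abel⟩
  zero_mem' := ⟨0, 0, .zero, .zero, by simp⟩
  smul_mem' := by
    rintro c _ ⟨Y₁, Y₂, hY₁, hY₂, rfl⟩
    refine ⟨(c : ℝ) • Y₁, (c : ℝ) • Y₂, hY₁.smul c.2, hY₂.smul c.2, ?_⟩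
    simp [Nonneg.coe_smul]
  isClosed' := isClosed_setOf_posSemidef_add_ptranspose m n

section decomposableCone

variable {m n : ℕ}

lemma posSemidef_mem_decomposableCone {A : Matrix (Fin m × Fin n) (Fin m × Fin n) ℂ}
    (hA : A.PosSemidef) : A ∈ decomposableCone m n :=
  ⟨A, 0, hA, .zero, by simp⟩

lemma ptranspose_mem_decomposableCone {A : Matrix (Fin m × Fin n) (Fin m × Fin n) ℂ}
    (hA : A.PosSemidef) : ptranspose A ∈ decomposableCone m n :=
  ⟨0, A, .zero, hA, by simp⟩

lemma re_trace_mul_nonneg_of_mem_decomposableCone {X Y : Matrix (Fin m × Fin n) (Fin m × Fin n) ℂ}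
    (hX : X.PosSemidef) (hΓX : (ptranspose X).PosSemidef) (hY : Y ∈ decomposableCone m n) :
    0 ≤ (X * Y).trace.re := by
  obtain ⟨Y₁, Y₂, hY₁, hY₂, rfl⟩ := hY
  rw [Matrix.mul_add, trace_add, ← trace_ptranspose_mul, add_re]
  exact add_nonneg (Complex.nonneg_iff.1 (hX.trace_mul_nonneg hY₁)).1
    (Complex.nonneg_iff.1 (hΓX.trace_mul_nonneg hY₂)).1

lemma exists_ppt_re_trace_mul_neg_of_notMem_decomposableCone
    {Y : Matrix (Fin m × Fin n) (Fin m × Fin n) ℂ} (hY : Y.IsHermitian)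
    (hYK : Y ∉ decomposableCone m n) :
    ∃ Z, Z.PosSemidef ∧ (ptranspose Z).PosSemidef ∧ (Z * Y).trace.re < 0 := by
  obtain ⟨f, hfK, hfY⟩ := ProperCone.hyperplane_separation_point _ hYK
  obtain ⟨W, hW⟩ := exists_eq_re_trace_mul f.toLinearMap
  -- on Hermitian matrices `X`, `Re Tr (X (W + Wᴴ)) = 2 f X`
  have hWK : ∀ X ∈ decomposableCone m n, X.IsHermitian → 0 ≤ (X * (W + Wᴴ)).trace.re :=
    fun X hXK hX => by
      rw [re_trace_mul_add_conjTranspose hX, ← hW]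
      exact mul_nonneg zero_le_two (hfK X hXK)
  have hZ : (W + Wᴴ).IsHermitian := by
    simp [IsHermitian, add_comm]
  refine ⟨W + Wᴴ, posSemidef_of_re_trace_mul_nonneg hZ fun X hX =>
    hWK X (posSemidef_mem_decomposableCone hX) hX.1, posSemidef_of_re_trace_mul_nonneg hZ.ptranspose
    fun X hX => ?_, ?_⟩
  · rw [← trace_ptranspose_mul]
    exact hWK _ (ptranspose_mem_decomposableCone hX) hX.1.ptranspose
  · rw [trace_mul_comm, re_trace_mul_add_conjTranspose hY, ← hW, ContinuousLinearMap.coe_coe]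
    linarith

lemma re_trace_mul_nonneg_of_forall_trace_eq_one {Y : Matrix (Fin m × Fin n) (Fin m × Fin n) ℂ}
    (h : ∀ X : Matrix (Fin m × Fin n) (Fin m × Fin n) ℂ,
      X.PosSemidef → X.trace = 1 → (ptranspose X).PosSemidef → 0 ≤ (X * Y).trace.re)
    {Z : Matrix (Fin m × Fin n) (Fin m × Fin n) ℂ} (hZ : Z.PosSemidef)
    (hΓZ : (ptranspose Z).PosSemidef) : 0 ≤ (Z * Y).trace.re := by
  obtain rfl | hZ0 := eq_or_ne Z 0
  · simp
  obtain ⟨htr_nonneg, htr_im⟩ := nonneg_iff.1 hZ.trace_nonneg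
  set t := Z.trace.re
  have htr : Z.trace = t := Complex.ext rfl htr_im.symm
  have ht : 0 < t := htr_nonneg.lt_of_ne fun h => hZ0 (hZ.trace_eq_zero_iff.1 (by simp [htr, ← h]))
  have hstate := h (t⁻¹ • Z) (hZ.smul (inv_nonneg.2 ht.le)) (by simp [trace_smul, htr, ht.ne'])
    (by simpa using hΓZ.smul (inv_nonneg.2 ht.le))
  rw [smul_mul, trace_smul, smul_re, smul_eq_mul] at hstate
  exact (mul_nonneg_iff_of_pos_left (inv_pos.2 ht)).1 hstate

end decomposableCone

/-- The dual cone of the set of PPT states equals `{Y₁ + Y₂^Γ : Y₁, Y₂ ⪰ 0}`. -/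
theorem stmt_13 (m n : ℕ) :
    {Y : Matrix (Fin m × Fin n) (Fin m × Fin n) ℂ | Y.IsHermitian ∧
        ∀ X : Matrix (Fin m × Fin n) (Fin m × Fin n) ℂ,
          X.PosSemidef → X.trace = 1 → (ptranspose X).PosSemidef →
          0 ≤ ((X * Y).trace).re} =
    {Y : Matrix (Fin m × Fin n) (Fin m × Fin n) ℂ |
        ∃ Y₁ Y₂, Y₁.PosSemidef ∧ Y₂.PosSemidef ∧ Y = Y₁ + ptranspose Y₂} := by
  ext Y
  constructor
  · rintro ⟨hY, hdual⟩
    by_contra hYK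
    obtain ⟨Z, hZ, hΓZ, hneg⟩ := exists_ppt_re_trace_mul_neg_of_notMem_decomposableCone hY hYK
    exact hneg.not_ge (re_trace_mul_nonneg_of_forall_trace_eq_one hdual hZ hΓZ)
  · rintro hYK
    refine ⟨?_, fun X hX _ hΓX => re_trace_mul_nonneg_of_mem_decomposableCone hX hΓX hYK⟩
    obtain ⟨Y₁, Y₂, hY₁, hY₂, rfl⟩ := hYK
    exact hY₁.1.add hY₂.1.ptranspose
end
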